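/- Fix positive integers c, m, s, let A_1,…,A_s be nonzero 0-1 matrices each with c rows and m columns, and for n ≥ m let I_n ⊆ R_n be the ideal generated by the Sym(n)-orbits of x^{A_1},…,x^{A_s} (each A_i regarded as a c×n matrix by appending zero columns). Fix an integer j ≥ 0. Then there exist a polynomial p with rational coefficients and an integer N such that for all n ≥ N, the number of Sym(n)-orbits on the set of j-dimensional faces of the Stanley-Reisner complex Δ(I_n) equals p(n). -/

import Mathlib

open MvPolynomial Finset

noncomputable section

/-- The squarefree monomial `x^B` with exponent matrix `B`, columns given as subsets of `[c]`. -/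
def matMon (K : Type*) [CommSemiring K] {c n : ℕ}
    (B : Fin n → Finset (Fin c)) : MvPolynomial (Fin c × Fin n) K :=
  ∏ j : Fin n, ∏ i ∈ B j, X (i, j)

/-- Pad a `c × m` matrix with zero columns to a `c × n` matrix. -/
def pad {c m : ℕ} (n : ℕ) (A : Fin m → Finset (Fin c)) : Fin n → Finset (Fin c) :=
  fun j => if h : (j : ℕ) < m then A ⟨j, h⟩ else ∅

/-- The ideal `I_n ⊆ R_n` generated by the `Sym(n)`-orbits of `x^{A_1}, …, x^{A_s}`. -/
def chainIdeal (K : Type*) [CommSemiring K] {c m s : ℕ}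
    (A : Fin s → Fin m → Finset (Fin c)) (n : ℕ) :
    Ideal (MvPolynomial (Fin c × Fin n) K) :=
  Ideal.span {p | ∃ (i : Fin s) (σ : Equiv.Perm (Fin n)),
    p = rename (fun v : Fin c × Fin n => (v.1, σ v.2)) (matMon K (pad n (A i)))}


namespace FaceOrbitAux

variable {c n m s : ℕ}

/-- Exponent finsupp of the squarefree monomial with support `F`. -/
def expF {V : Type*} [DecidableEq V] (F : Finset V) : V →₀ ℕ :=
  ∑ v ∈ F, Finsupp.single v 1

lemma expF_apply {V : Type*} [DecidableEq V] (F : Finset V) (w : V) :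
    expF F w = if w ∈ F then 1 else 0 := by
  classical
  simp [expF, Finset.sum_apply', Finsupp.single_apply, Finset.sum_ite_eq]

lemma expF_le_iff {V : Type*} [DecidableEq V] {F G : Finset V} :
    expF F ≤ expF G ↔ F ⊆ G := by
  constructor
  · intro h v hv
    have := h v
    simp only [expF_apply, hv, if_true] at this
    by_contra hvG
    simp [hvG] at this
  · intro h v
    simp only [expF_apply]
    split_ifs with h1 h2
    · rfl
    · exact absurd (h h1) h2
    · omega
    · rfl

lemma prod_X_eq_monomial {V : Type*} [DecidableEq V] (K : Type*) [CommSemiring K] (F : Finset V) :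
    (∏ v ∈ F, (X v : MvPolynomial V K)) = monomial (expF F) 1 := by
  classical
  induction F using Finset.induction_on with
  | empty => simp [expF]
  | insert _ _ h ih =>
    rw [Finset.prod_insert h, ih, X, monomial_mul, one_mul]
    congr 1
    rw [expF, expF, Finset.sum_insert h]


/-- The set of matrix positions determined by column sets `B`. -/
def toFace {c n : ℕ} (B : Fin n → Finset (Fin c)) : Finset (Fin c × Fin n) :=
  Finset.univ.filter (fun v => v.1 ∈ B v.2)

/-- The `j`-th column of a set of positions. -/
def col {c n : ℕ} (F : Finset (Fin c × Fin n)) (j : Fin n) : Finset (Fin c) :=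
  Finset.univ.filter (fun i => (i, j) ∈ F)

lemma mem_col {F : Finset (Fin c × Fin n)} {i : Fin c} {j : Fin n} :
    i ∈ col F j ↔ (i, j) ∈ F := by simp [col]

lemma mem_toFace {B : Fin n → Finset (Fin c)} {v : Fin c × Fin n} :
    v ∈ toFace B ↔ v.1 ∈ B v.2 := by simp [toFace]

@[simp] lemma col_toFace (B : Fin n → Finset (Fin c)) : col (toFace B) = B := by
  funext j; ext i; simp [mem_col, mem_toFace]

@[simp] lemma toFace_col (F : Finset (Fin c × Fin n)) : toFace (col F) = F := by
  ext v; cases v; simp [mem_toFace, mem_col]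

lemma matMon_eq (K : Type*) [CommSemiring K] (B : Fin n → Finset (Fin c)) :
    matMon K B = monomial (expF (toFace B)) 1 := by
  classical
  have h1 : ∀ j : Fin n, (∏ i ∈ B j, (X (i, j) : MvPolynomial (Fin c × Fin n) K))
      = monomial (∑ i ∈ B j, Finsupp.single (i, j) 1) 1 := by
    intro j
    induction B j using Finset.induction_on with
    | empty => simp
    | insert _ _ h ih =>
      rw [Finset.prod_insert h, ih, X, monomial_mul, one_mul, Finset.sum_insert h]
  rw [matMon]
  simp_rw [h1]
  have h2 : (∏ j : Fin n, (monomial (∑ i ∈ B j, Finsupp.single (i, j) 1) (1 : K)))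
      = monomial (∑ j : Fin n, ∑ i ∈ B j, Finsupp.single (i, j) 1) 1 := by
    induction (Finset.univ : Finset (Fin n)) using Finset.induction_on with
    | empty => simp
    | insert _ _ h ih =>
      rw [Finset.prod_insert h, ih, monomial_mul, one_mul, Finset.sum_insert h]
  rw [h2]
  have h3 : (∑ j : Fin n, ∑ i ∈ B j, Finsupp.single ((i, j) : Fin c × Fin n) 1)
      = expF (toFace B) := by
    ext w
    obtain ⟨wi, wj⟩ := w
    rw [expF_apply]
    rw [Finset.sum_apply']
    simp_rw [Finset.sum_apply', Finsupp.single_apply]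
    rw [Finset.sum_eq_single wj]
    · simp only [Prod.mk.injEq, and_true]
      rw [Finset.sum_ite_eq' (B wj) wi (fun _ => (1:ℕ))]
      simp [mem_toFace]
    · intro b _ hb
      apply Finset.sum_eq_zero
      intro i _
      simp [Prod.ext_iff, hb]
    · simp
  rw [h3]

lemma expF_image {V W : Type*} [DecidableEq V] [DecidableEq W] (F : Finset V)
    {ρ : V → W} (hρ : Function.Injective ρ) :
    expF (F.image ρ) = Finsupp.mapDomain ρ (expF F) := by
  classical
  rw [expF, expF, Finset.sum_image (fun a _ b _ h => hρ h)]
  rw [show (Finsupp.mapDomain ρ (∑ v ∈ F, Finsupp.single v 1) : W →₀ ℕ)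
      = ∑ v ∈ F, Finsupp.mapDomain ρ (Finsupp.single v 1) from
    map_sum (Finsupp.mapDomain.addMonoidHom ρ) _ _]
  refine Finset.sum_congr rfl fun v _ => ?_
  rw [Finsupp.mapDomain_single]

lemma ρ_injective (σ : Equiv.Perm (Fin n)) :
    Function.Injective (fun v : Fin c × Fin n => (v.1, σ v.2)) := by
  rintro ⟨a, b⟩ ⟨a', b'⟩ h
  simp only [Prod.mk.injEq] at h
  exact Prod.ext h.1 (σ.injective h.2)

lemma chainIdeal_eq (K : Type*) [CommSemiring K] (A : Fin s → Fin m → Finset (Fin c)) (n : ℕ) :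
    chainIdeal K A n = Ideal.span ((fun d => monomial d (1 : K)) ''
      {d | ∃ (i : Fin s) (σ : Equiv.Perm (Fin n)),
        d = expF ((toFace (pad n (A i))).image (fun v : Fin c × Fin n => (v.1, σ v.2)))}) := by
  rw [chainIdeal]
  congr 1
  ext p
  constructor
  · rintro ⟨i, σ, rfl⟩
    refine ⟨expF ((toFace (pad n (A i))).image (fun v : Fin c × Fin n => (v.1, σ v.2))),
      ⟨i, σ, rfl⟩, ?_⟩
    rw [matMon_eq, rename_monomial, expF_image _ (ρ_injective σ)]
  · rintro ⟨d, ⟨i, σ, rfl⟩, rfl⟩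
    refine ⟨i, σ, ?_⟩
    rw [matMon_eq, rename_monomial, expF_image _ (ρ_injective σ)]

lemma mem_chainIdeal_iff (K : Type*) [Field K] (A : Fin s → Fin m → Finset (Fin c)) (n : ℕ)
    (F : Finset (Fin c × Fin n)) :
    (∏ v ∈ F, (X v : MvPolynomial (Fin c × Fin n) K)) ∈ chainIdeal K A n ↔
      ∃ (i : Fin s) (σ : Equiv.Perm (Fin n)),
        (toFace (pad n (A i))).image (fun v : Fin c × Fin n => (v.1, σ v.2)) ⊆ F := by
  classical
  rw [chainIdeal_eq, prod_X_eq_monomial, mem_ideal_span_monomial_image]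
  rw [support_monomial, if_neg (one_ne_zero)]
  simp only [Finset.mem_singleton, forall_eq, Set.mem_setOf_eq]
  constructor
  · rintro ⟨si, ⟨i, σ, rfl⟩, hle⟩
    exact ⟨i, σ, expF_le_iff.mp hle⟩
  · rintro ⟨i, σ, hsub⟩
    exact ⟨_, ⟨i, σ, rfl⟩, expF_le_iff.mpr hsub⟩


/-- Multiset of nonempty column types. -/
def ctype {c n : ℕ} (F : Finset (Fin c × Fin n)) : Multiset (Finset (Fin c)) :=
  (Finset.univ.val.map (col F)).filter (· ≠ ∅)

lemma univ_val_map_comp {α β γ : Type*} [Fintype α] [Fintype β] (e : α ≃ β) (f : β → γ) :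
    Finset.univ.val.map (f ∘ e) = Finset.univ.val.map f := by
  rw [← Multiset.map_map, Multiset.map_univ_val_equiv]

lemma col_image (F : Finset (Fin c × Fin n)) (σ : Equiv.Perm (Fin n)) (j : Fin n) :
    col (F.image (fun v => (v.1, σ v.2))) j = col F (σ⁻¹ j) := by
  ext i
  simp only [mem_col, Finset.mem_image]
  constructor
  · rintro ⟨⟨a, b⟩, hab, h⟩
    simp only [Prod.mk.injEq] at h
    obtain ⟨rfl, rfl⟩ := h
    simpa using hab
  · intro h
    exact ⟨(i, σ⁻¹ j), h, by simp⟩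

lemma exists_comp_perm_of_map_eq {α : Type*} [DecidableEq α] {f g : Fin n → α}
    (h : Finset.univ.val.map f = Finset.univ.val.map g) :
    ∃ σ : Equiv.Perm (Fin n), ∀ x, g (σ x) = f x := by
  have hcard : ∀ a : α, Fintype.card {x // f x = a} = Fintype.card {x // g x = a} := by
    intro a
    have := congrArg (Multiset.count a) h
    rw [Multiset.count_map, Multiset.count_map] at this
    rw [Fintype.card_subtype, Fintype.card_subtype, Finset.card_def, Finset.card_def,
      Finset.filter_val, Finset.filter_val]
    simp only [eq_comm] at this ⊢
    convert this using 2
  exact ⟨Equiv.ofFiberEquiv (fun a => Fintype.equivOfCardEq (hcard a)),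
    fun x => Equiv.ofFiberEquiv_map _ x⟩

lemma ctype_image (F : Finset (Fin c × Fin n)) (σ : Equiv.Perm (Fin n)) :
    ctype (F.image (fun v => (v.1, σ v.2))) = ctype F := by
  unfold ctype
  congr 1
  have : col (F.image (fun v => (v.1, σ v.2))) = (col F) ∘ (σ⁻¹ : Equiv.Perm (Fin n)) := by
    funext j; exact col_image F σ j
  rw [this, univ_val_map_comp (σ⁻¹ : Equiv.Perm (Fin n)) (col F)]

lemma full_eq_of_ctype_eq {F G : Finset (Fin c × Fin n)} (h : ctype G = ctype F) :
    Finset.univ.val.map (col G) = Finset.univ.val.map (col F) := by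
  classical
  have key : ∀ H : Finset (Fin c × Fin n),
      Finset.univ.val.map (col H) = ctype H + Multiset.replicate (n - Multiset.card (ctype H)) ∅ := by
    intro H
    have h1 := Multiset.filter_add_not (fun t => t ≠ ∅) (Finset.univ.val.map (col H))
    have h2 : Multiset.filter (fun t => ¬ t ≠ ∅) (Finset.univ.val.map (col H))
        = Multiset.replicate (n - Multiset.card (ctype H)) ∅ := by
      rw [Multiset.eq_replicate]
      constructor
      · have := congrArg Multiset.card h1
        rw [Multiset.card_add] at this
        rw [Multiset.card_map] at this
        have h4 : ctype H = Multiset.filter (fun t => t ≠ ∅) (Finset.univ.val.map (col H)) := rfl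
        rw [← h4] at this
        have h3 : Multiset.card (Finset.univ.val : Multiset (Fin n)) = n := by
          rw [← Finset.card_def]; simp
        omega
      · intro b hb
        rw [Multiset.mem_filter] at hb
        simpa using hb.2
    rw [← h1, h2]
    rfl
  rw [key G, key F, h]


lemma exists_image_iff_ctype_eq {F G : Finset (Fin c × Fin n)} :
    (∃ σ : Equiv.Perm (Fin n), G = F.image (fun v => (v.1, σ v.2))) ↔ ctype G = ctype F := by
  constructor
  · rintro ⟨σ, rfl⟩
    exact ctype_image F σ
  · intro h
    obtain ⟨σ, hσ⟩ := exists_comp_perm_of_map_eq (full_eq_of_ctype_eq h)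
    refine ⟨σ⁻¹, ?_⟩
    ext ⟨i, jj⟩
    have : i ∈ col G jj ↔ i ∈ col F (σ jj) := by rw [hσ jj]
    rw [mem_col, mem_col] at this
    rw [this]
    constructor
    · intro hF
      exact Finset.mem_image.mpr ⟨(i, σ jj), hF, by simp⟩
    · intro hG
      obtain ⟨⟨a, b⟩, hab, hh⟩ := Finset.mem_image.mp hG
      simp only [Prod.mk.injEq] at hh
      obtain ⟨rfl, hb⟩ := hh
      have : b = σ jj := by
        have := congrArg σ hb
        simpa using this
      rwa [this] at hab

lemma card_eq_ctype_sum (F : Finset (Fin c × Fin n)) :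
    F.card = ((ctype F).map Finset.card).sum := by
  classical
  have h1 : F.card = ∑ jj : Fin n, (col F jj).card := by
    rw [Finset.card_eq_sum_card_fiberwise (f := Prod.snd) (t := Finset.univ)
      (fun x _ => Finset.mem_univ _)]
    refine Finset.sum_congr rfl fun jj _ => ?_
    refine Finset.card_bij' (fun v _ => v.1) (fun i _ => (i, jj)) ?_ ?_ ?_ ?_
    · rintro ⟨a, b⟩ hv
      rw [Finset.mem_filter] at hv
      obtain ⟨h4, h5⟩ := hv
      cases h5
      exact mem_col.mpr h4
    · intro i hi
      exact Finset.mem_filter.mpr ⟨mem_col.mp hi, rfl⟩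
    · rintro ⟨a, b⟩ hv
      rw [Finset.mem_filter] at hv
      obtain ⟨h4, h5⟩ := hv
      cases h5
      rfl
    · intro i _
      rfl
  rw [h1]
  have h2 : ∑ jj : Fin n, (col F jj).card
      = ((Finset.univ.val.map (col F)).map Finset.card).sum := by
    rw [Multiset.map_map]
    rfl
  rw [h2]
  have h3 := Multiset.filter_add_not (fun t => t ≠ ∅) (Finset.univ.val.map (col F))
  conv_lhs => rw [← h3]
  rw [Multiset.map_add, Multiset.sum_add]
  have h4 : ((Multiset.filter (fun t => ¬ t ≠ ∅) (Finset.univ.val.map (col F))).map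
      Finset.card).sum = 0 := by
    apply Multiset.sum_eq_zero
    intro x hx
    rw [Multiset.mem_map] at hx
    obtain ⟨t, ht, rfl⟩ := hx
    rw [Multiset.mem_filter] at ht
    have : t = ∅ := by simpa using ht.2
    simp [this]
  rw [h4, add_zero]
  rfl

lemma exists_fun_of_card (M : Multiset (Finset (Fin c))) :
    ∃ g : Fin (Multiset.card M) → Finset (Fin c), Finset.univ.val.map g = M := by
  induction M using Multiset.induction_on with
  | empty => exact ⟨fun i => ∅, by simp; rfl⟩
  | cons a M ih =>
    obtain ⟨g, hg⟩ := ih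
    refine ⟨fun i => (Fin.cons a g : Fin (Multiset.card M + 1) → Finset (Fin c)) (Fin.cast (Multiset.card_cons a M) i), ?_⟩
    rw [Fin.univ_val_map]
    have : List.ofFn (fun i => (Fin.cons a g : Fin (Multiset.card M + 1) → Finset (Fin c)) (Fin.cast (Multiset.card_cons a M) i))
        = List.ofFn (Fin.cons a g : Fin (Multiset.card M + 1) → Finset (Fin c)) := by
      apply List.ext_getElem (by simp)
      intro k h1 h2
      simp
    rw [this, List.ofFn_succ]
    simp only [Fin.cons_zero, Fin.cons_succ]
    rw [← Multiset.cons_coe]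
    congr 1
    rw [← Fin.univ_val_map, hg]

/-- Realize a multiset of at most `n` nonempty column types as a subset of the grid. -/
lemma exists_ctype_eq (M : Multiset (Finset (Fin c))) (hne : ∀ t ∈ M, t ≠ ∅)
    (hcard : Multiset.card M ≤ n) :
    ∃ F : Finset (Fin c × Fin n), ctype F = M := by
  classical
  set M' : Multiset (Finset (Fin c)) := M + Multiset.replicate (n - Multiset.card M) ∅ with hM'
  have hcard' : Multiset.card M' = n := by
    rw [hM', Multiset.card_add, Multiset.card_replicate]
    omega
  obtain ⟨g, hg⟩ := exists_fun_of_card M'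
  refine ⟨toFace (fun i => g (Fin.cast hcard'.symm i)), ?_⟩
  rw [ctype, col_toFace]
  have : Finset.univ.val.map (fun i => g (Fin.cast hcard'.symm i)) = M' := by
    rw [show (fun i => g (Fin.cast hcard'.symm i)) = g ∘ (finCongr hcard'.symm) from rfl,
      univ_val_map_comp, hg]
  rw [this, hM', Multiset.filter_add]
  have e1 : Multiset.filter (· ≠ ∅) M = M := Multiset.filter_eq_self.mpr hne
  have e2 : Multiset.filter (· ≠ ∅) (Multiset.replicate (n - Multiset.card M) (∅ : Finset (Fin c)))
      = 0 := by
    rw [Multiset.filter_eq_nil]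
    intro a ha
    have := Multiset.eq_of_mem_replicate ha
    simp [this]
  rw [e1, e2, add_zero]


/-- `M` contains an embedded copy of the nonempty columns of `A'`. -/
def Blocked {c m : ℕ} (A' : Fin m → Finset (Fin c)) (M : Multiset (Finset (Fin c))) : Prop :=
  ∃ g : Fin m → Finset (Fin c),
    (∀ l, A' l ≠ ∅ → A' l ⊆ g l) ∧
    ((Finset.univ.filter (fun l => A' l ≠ ∅)).val.map g) ≤ M

lemma image_toFace_subset_iff {B : Fin n → Finset (Fin c)} {F : Finset (Fin c × Fin n)}
    {σ : Equiv.Perm (Fin n)} :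
    (toFace B).image (fun v => (v.1, σ v.2)) ⊆ F ↔ ∀ l, B l ⊆ col F (σ l) := by
  constructor
  · intro h l i hi
    rw [mem_col]
    exact h (Finset.mem_image.mpr ⟨(i, l), mem_toFace.mpr hi, rfl⟩)
  · intro h v hv
    obtain ⟨⟨i, l⟩, hw, rfl⟩ := Finset.mem_image.mp hv
    exact mem_col.mp (h l (mem_toFace.mp hw))

lemma blocked_of_subset (hmn : m ≤ n) (A' : Fin m → Finset (Fin c))
    (F : Finset (Fin c × Fin n)) (σ : Equiv.Perm (Fin n))
    (h : ∀ l : Fin n, pad n A' l ⊆ col F (σ l)) : Blocked A' (ctype F) := by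
  classical
  set g : Fin m → Finset (Fin c) := fun l => col F (σ (Fin.castLE hmn l)) with hgdef
  have hpad : ∀ l : Fin m, pad n A' (Fin.castLE hmn l) = A' l := by
    intro l
    rw [pad]
    rw [dif_pos (show ((Fin.castLE hmn l : Fin n) : ℕ) < m from l.isLt)]
    exact congrArg A' (Fin.ext rfl)
  have hsub : ∀ l, A' l ≠ ∅ → A' l ⊆ g l := by
    intro l _
    rw [hgdef]
    have := h (Fin.castLE hmn l)
    rwa [hpad l] at this
  have hinj' : Function.Injective (fun l : Fin m => σ (Fin.castLE hmn l)) := by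
    intro a b hab
    have := σ.injective hab
    exact Fin.castLE_injective hmn this
  refine ⟨g, hsub, ?_⟩
  · set T₀ : Finset (Fin m) := Finset.univ.filter (fun l => A' l ≠ ∅) with hT₀
    set emb : Fin m ↪ Fin n := ⟨fun l => σ (Fin.castLE hmn l), hinj'⟩ with hemb
    have h1 : T₀.val.map g = ((T₀.map emb).val).map (col F) := by
      rw [Finset.map_val, Multiset.map_map]
      rfl
    rw [h1]
    rw [show ctype F = Multiset.filter (fun t => t ≠ ∅) (Finset.univ.val.map (col F)) from rfl,
      Multiset.le_filter]
    constructor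
    · exact Multiset.map_le_map (Finset.val_le_iff.mpr (Finset.subset_univ _))
    · intro t ht
      rw [Multiset.mem_map] at ht
      obtain ⟨x, hx, rfl⟩ := ht
      rw [← Finset.mem_def, Finset.mem_map] at hx
      obtain ⟨l, hl, rfl⟩ := hx
      rw [hT₀, Finset.mem_filter] at hl
      intro hempty
      have h5 : A' l ⊆ col F (emb l) := by
        have := h (Fin.castLE hmn l)
        rwa [hpad l] at this
      have : A' l = ∅ := by
        rw [← Finset.subset_empty, ← hempty]
        exact h5
      exact hl.2 this


/-- Select distinct representatives: if the multiset `T.val.map g` embeds in `u.val.map f`,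
one can pick injectively preimages. -/
lemma exists_pick {α γ β : Type*} [DecidableEq α] [DecidableEq γ] [DecidableEq β] [Nonempty γ]
    (T : Finset α) (g : α → β) (f : γ → β) :
    ∀ u : Finset γ, T.val.map g ≤ u.val.map f →
      ∃ ι : α → γ, Set.InjOn ι T ∧ ∀ a ∈ T, ι a ∈ u ∧ f (ι a) = g a := by
  classical
  induction T using Finset.induction_on with
  | empty =>
    intro u _
    exact ⟨fun _ => Classical.arbitrary γ, by simp [Set.InjOn], by simp⟩
  | @insert a s ha ih =>
    intro u h
    rw [Finset.insert_val_of_notMem ha, Multiset.map_cons] at h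
    have hga : g a ∈ u.val.map f := Multiset.mem_of_le h (Multiset.mem_cons_self _ _)
    obtain ⟨x, hxu, hfx⟩ := Multiset.mem_map.mp hga
    have hrest : s.val.map g ≤ (u.erase x).val.map f := by
      have h2 := Multiset.erase_le_erase (g a) h
      rw [Multiset.erase_cons_head] at h2
      have h3 : (u.val.map f).erase (g a) = (u.erase x).val.map f := by
        rw [Finset.erase_val]
        conv_lhs => rw [← Multiset.cons_erase hxu]
        rw [Multiset.map_cons, hfx, Multiset.erase_cons_head]
      rwa [h3] at h2
    obtain ⟨ι, hinj, hval⟩ := ih (u.erase x) hrest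
    have hne : ∀ b, b ∈ s → b ≠ a := fun b hb hba => ha (hba ▸ hb)
    refine ⟨Function.update ι a x, ?_, ?_⟩
    · intro p hp q hq hpq
      simp only [Finset.coe_insert, Set.mem_insert_iff, Finset.mem_coe] at hp hq
      rcases hp with rfl | hp <;> rcases hq with rfl | hq
      · rfl
      · exfalso
        rw [Function.update_self, Function.update_of_ne (hne q hq)] at hpq
        have := (hval q hq).1
        rw [← hpq] at this
        exact (Finset.ne_of_mem_erase this) rfl
      · exfalso
        rw [Function.update_self, Function.update_of_ne (hne p hp)] at hpq
        have := (hval p hp).1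
        rw [hpq] at this
        exact (Finset.ne_of_mem_erase this) rfl
      · rw [Function.update_of_ne (hne p hp), Function.update_of_ne (hne q hq)] at hpq
        exact hinj hp hq hpq
    · intro b hb
      rcases Finset.mem_insert.mp hb with rfl | hb
      · rw [Function.update_self]
        exact ⟨Finset.mem_def.mpr hxu, hfx⟩
      · rw [Function.update_of_ne (hne b hb)]
        exact ⟨Finset.mem_of_mem_erase (hval b hb).1, (hval b hb).2⟩


lemma subset_of_blocked (hmn : m ≤ n) (A' : Fin m → Finset (Fin c))
    (F : Finset (Fin c × Fin n)) (h : Blocked A' (ctype F)) :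
    ∃ σ : Equiv.Perm (Fin n), ∀ l : Fin n, pad n A' l ⊆ col F (σ l) := by
  classical
  obtain ⟨g, hsub, hle⟩ := h
  rcases Nat.eq_zero_or_pos n with rfl | hn
  · exact ⟨1, fun l => l.elim0⟩
  have : Nonempty (Fin n) := ⟨⟨0, hn⟩⟩
  set T₀ : Finset (Fin m) := Finset.univ.filter (fun l => A' l ≠ ∅) with hT₀
  have hle2 : T₀.val.map g ≤ Finset.univ.val.map (col F) := by
    refine le_trans hle ?_
    rw [show ctype F = Multiset.filter (fun t => t ≠ ∅) (Finset.univ.val.map (col F)) from rfl]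
    exact Multiset.filter_le _ _
  obtain ⟨ι, hinj, hval⟩ := exists_pick T₀ g (col F) Finset.univ hle2
  set Φ : Fin n → Fin n := fun x => if hx : (x : ℕ) < m then ι ⟨x, hx⟩ else x with hΦ
  set s' : Finset (Fin n) := T₀.map ⟨Fin.castLE hmn, Fin.castLE_injective hmn⟩ with hs'
  have hΦs' : ∀ x ∈ s', ∃ l ∈ T₀, Fin.castLE hmn l = x := by
    intro x hx
    obtain ⟨l, hl, hlx⟩ := Finset.mem_map.mp hx
    exact ⟨l, hl, hlx⟩
  have hΦ_eq : ∀ l : Fin m, Φ (Fin.castLE hmn l) = ι l := by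
    intro l
    rw [hΦ]
    simp only []
    rw [dif_pos (show ((Fin.castLE hmn l : Fin n) : ℕ) < m from l.isLt)]
    exact congrArg ι (Fin.ext rfl)
  have hinjΦ : Set.InjOn Φ ↑s' := by
    intro p hp q hq hpq
    obtain ⟨lp, hlp, rfl⟩ := hΦs' p (Finset.mem_coe.mp hp)
    obtain ⟨lq, hlq, rfl⟩ := hΦs' q (Finset.mem_coe.mp hq)
    rw [hΦ_eq lp, hΦ_eq lq] at hpq
    exact congrArg _ (hinj (Finset.mem_coe.mpr hlp) (Finset.mem_coe.mpr hlq) hpq)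
  set e := Equiv.Set.imageOfInjOn Φ ↑s' hinjΦ with he
  refine ⟨Equiv.extendSubtype e, ?_⟩
  intro l
  by_cases hlm : (l : ℕ) < m
  · set l₀ : Fin m := ⟨l, hlm⟩ with hl₀
    have hpadl : pad n A' l = A' l₀ := by rw [pad, dif_pos hlm]
    by_cases hA0 : A' l₀ = ∅
    · rw [hpadl, hA0]
      exact Finset.empty_subset _
    · have hl₀T : l₀ ∈ T₀ := by rw [hT₀, Finset.mem_filter]; exact ⟨Finset.mem_univ _, hA0⟩
      have hlcast : Fin.castLE hmn l₀ = l := Fin.ext rfl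
      have hls' : l ∈ (↑s' : Set (Fin n)) := by
        rw [Finset.mem_coe, hs']
        exact Finset.mem_map.mpr ⟨l₀, hl₀T, hlcast⟩
      have hσ : Equiv.extendSubtype e l = Φ l := by
        rw [Equiv.extendSubtype_apply_of_mem e l hls']
        rfl
      rw [hσ, hpadl, ← hlcast, hΦ_eq l₀]
      have := (hval l₀ hl₀T).2
      rw [this]
      exact hsub l₀ hA0
  · rw [pad, dif_neg hlm]
    exact Finset.empty_subset _


/-- The `n`-independent classifying set of orbits of `j`-faces. -/
def goodSet (c : ℕ) {m s : ℕ} (A : Fin s → Fin m → Finset (Fin c)) (j : ℕ) :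
    Set (Multiset (Finset (Fin c))) :=
  {M | (∀ t ∈ M, t ≠ ∅) ∧ (M.map Finset.card).sum = j + 1 ∧ ∀ i : Fin s, ¬ Blocked (A i) M}

lemma card_le_of_sum {M : Multiset (Finset (Fin c))} (hne : ∀ t ∈ M, t ≠ ∅) :
    Multiset.card M ≤ (M.map Finset.card).sum := by
  have h1 : (M.map (fun _ => 1)).sum ≤ (M.map Finset.card).sum := by
    refine Multiset.sum_map_le_sum_map _ _ ?_
    intro t ht
    exact Nat.one_le_iff_ne_zero.mpr (fun h0 => hne t ht (Finset.card_eq_zero.mp h0))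
  rwa [Multiset.map_const', Multiset.sum_replicate, smul_eq_mul, mul_one] at h1

lemma ctype_nonempty (F : Finset (Fin c × Fin n)) : ∀ t ∈ ctype F, t ≠ ∅ := by
  intro t ht
  rw [show ctype F = Multiset.filter (fun t => t ≠ ∅) (Finset.univ.val.map (col F)) from rfl,
    Multiset.mem_filter] at ht
  exact ht.2

lemma not_mem_iff_good {K : Type*} [Field K] {A : Fin s → Fin m → Finset (Fin c)}
    (hmn : m ≤ n) (F : Finset (Fin c × Fin n)) :
    (∏ v ∈ F, (X v : MvPolynomial (Fin c × Fin n) K)) ∉ chainIdeal K A n ↔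
      ∀ i : Fin s, ¬ Blocked (A i) (ctype F) := by
  rw [mem_chainIdeal_iff]
  constructor
  · intro hnot i hB
    obtain ⟨σ, hσ⟩ := subset_of_blocked hmn (A i) F hB
    exact hnot ⟨i, σ, image_toFace_subset_iff.mpr hσ⟩
  · rintro hnb ⟨i, σ, hsub⟩
    exact hnb i (blocked_of_subset hmn (A i) F σ (image_toFace_subset_iff.mp hsub))

lemma orbit_set_eq {K : Type*} [Field K] {A : Fin s → Fin m → Finset (Fin c)} {j : ℕ}
    (hmn : m ≤ n) (hjn : j + 1 ≤ n) :
    {O : Set (Finset (Fin c × Fin n)) |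
        ∃ F : Finset (Fin c × Fin n),
          (∏ v ∈ F, (X v : MvPolynomial (Fin c × Fin n) K)) ∉ chainIdeal K A n ∧
          F.card = j + 1 ∧
          O = {G | ∃ σ : Equiv.Perm (Fin n),
            G = F.image (fun v => (v.1, σ v.2))}} =
      (fun M => {G : Finset (Fin c × Fin n) | ctype G = M}) '' goodSet c A j := by
  ext O
  simp only [Set.mem_setOf_eq, Set.mem_image]
  constructor
  · rintro ⟨F, hFnot, hFcard, rfl⟩
    refine ⟨ctype F, ⟨ctype_nonempty F, ?_, (not_mem_iff_good hmn F).mp hFnot⟩, ?_⟩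
    · rw [← card_eq_ctype_sum, hFcard]
    · ext G
      rw [Set.mem_setOf_eq, Set.mem_setOf_eq]
      exact exists_image_iff_ctype_eq.symm
  · rintro ⟨M, ⟨hne, hsum, hnb⟩, rfl⟩
    have hcard : Multiset.card M ≤ n := le_trans (le_trans (card_le_of_sum hne) (le_of_eq hsum)) hjn
    obtain ⟨F, hF⟩ := exists_ctype_eq M hne hcard
    refine ⟨F, ?_, ?_, ?_⟩
    · rw [not_mem_iff_good hmn F, hF]
      exact hnb
    · rw [card_eq_ctype_sum, hF, hsum]
    · ext G
      rw [Set.mem_setOf_eq, Set.mem_setOf_eq, ← hF]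
      exact exists_image_iff_ctype_eq.symm

lemma fiber_injOn {j : ℕ} {A : Fin s → Fin m → Finset (Fin c)} (hjn : j + 1 ≤ n) :
    Set.InjOn (fun M => {G : Finset (Fin c × Fin n) | ctype G = M}) (goodSet c A j) := by
  intro M1 h1 M2 h2 heq
  have hcard : Multiset.card M1 ≤ n :=
    le_trans (le_trans (card_le_of_sum h1.1) (le_of_eq h1.2.1)) hjn
  obtain ⟨F, hF⟩ := exists_ctype_eq M1 h1.1 hcard
  have hmem : F ∈ (fun M => {G : Finset (Fin c × Fin n) | ctype G = M}) M1 := hF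
  rw [heq] at hmem
  rw [← hF]
  exact hmem

end FaceOrbitAux

/-- **Counting orbits of `j`-faces.**  For a `Sym`-invariant chain of squarefree monomial
ideals `(I_n)` and fixed `j ≥ 0`, the number of `Sym(n)`-orbits of `j`-dimensional faces of
the Stanley–Reisner complex `Δ(I_n)` is eventually a polynomial in `n`. -/
theorem face_orbit_count_polynomial (K : Type*) [Field K] {c m s : ℕ}
    (hc : 0 < c) (hm : 0 < m) (hs : 0 < s)
    (A : Fin s → Fin m → Finset (Fin c)) (hA : ∀ i, ∃ j, A i j ≠ ∅) (j : ℕ) :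
    ∃ (p : Polynomial ℚ) (N : ℕ), m ≤ N ∧
      ∀ n : ℕ, N ≤ n →
        (Set.ncard {O : Set (Finset (Fin c × Fin n)) |
            ∃ F : Finset (Fin c × Fin n),
              (∏ v ∈ F, (X v : MvPolynomial (Fin c × Fin n) K)) ∉ chainIdeal K A n ∧
              F.card = j + 1 ∧
              O = {G | ∃ σ : Equiv.Perm (Fin n),
                G = F.image (fun v => (v.1, σ v.2))}} : ℚ) =
          p.eval (n : ℚ) := by
  classical
  refine ⟨Polynomial.C ((FaceOrbitAux.goodSet c A j).ncard : ℚ), m + j + 1, by omega, ?_⟩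
  intro n hn
  rw [Polynomial.eval_C]
  have hmn : m ≤ n := by omega
  have hjn : j + 1 ≤ n := by omega
  rw [FaceOrbitAux.orbit_set_eq (K := K) hmn hjn,
    Set.ncard_image_of_injOn (FaceOrbitAux.fiber_injOn hjn)]

end
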